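/- arXiv:2505.10374 — 3 statements merged into one kernel-verified Lean document; each statement's English description precedes it below -/
import Mathlib

section
/- An object W of the category S of sequences of k-vector spaces is an injective object of S if and only if the transition map d_W^i : W^i → W^{i+1} is surjective for every i ∈ ℤ. -/
open CategoryTheory CategoryTheory.Limits

/-- The category `S` of sequences of `k`-vector spaces: functors from `ℤ`
(viewed as a poset category) to `k`-vector spaces.  Explicitly, an object `V`
consists of `k`-vector spaces `V.obj i` for all `i : ℤ` together with transition
maps `V.obj i ⟶ V.obj (i+1)` (with no condition on composites), and a morphism
is a family of linear maps commuting with the transition maps. -/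
abbrev SeqCat (k : Type) [Field k] := ℤ ⥤ ModuleCat k

variable {k : Type} [Field k]

/-- The transition map `d_V^i : V^i ⟶ V^{i+1}` of a sequence `V`. -/
noncomputable def SeqCat.d (V : SeqCat k) (i : ℤ) : V.obj i ⟶ V.obj (i + 1) :=
  V.map (homOfLE (by omega))

/-!
Morphisms from the free functor `R[Hom(c, -)]` to `W` are the elements of `W.obj c`, and
precomposition with an epimorphism `f : c ⟶ d` embeds `R[Hom(d, -)]` into `R[Hom(c, -)]` and
induces `W.map f` on elements; so for injective `W` every `W.map f` is onto.

Conversely, given a monomorphism `g : X ⟶ Y` and `f : X ⟶ W`, apply Zorn's lemma to the partial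
morphisms `Y ⇢ W` extending `f ∘ g⁻¹`, recorded by their graphs. A maximal one is total: to
define it at `y ∈ Y^j`, take the least degree `l₀ ≥ j` in which the image of `y` already has a
value, and give `y` a preimage of that value under `W^j → W^{l₀}`. Every degree in which the
image of `y` has a value lies above `l₀`, so adjoining this pair keeps the graphs functional.
-/

universe u v w

section FreeCoyoneda

variable {C : Type*} [Category.{v} C] {R : Type u} [Ring R]

variable (R) in
-- `ULift` lets the free module live in the universe of `W`.
noncomputable abbrev freeCoyoneda (c : C) : C ⥤ ModuleCat.{max u v w} R where
  obj x := ModuleCat.of R (ULift.{w} (c ⟶ x) →₀ R)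
  map φ := ModuleCat.ofHom (Finsupp.lmapDomain R R fun g => ULift.up (g.down ≫ φ))
  map_id x := by ext; simp
  map_comp φ ψ := by ext; simp

noncomputable def freeCoyonedaMap {c d : C} (f : c ⟶ d) :
    freeCoyoneda.{u, v, w} R d ⟶ freeCoyoneda R c where
  app x := ModuleCat.ofHom (Finsupp.lmapDomain R R fun g => ULift.up (f ≫ g.down))
  naturality x y φ := ModuleCat.hom_ext <| Finsupp.lhom_ext fun g r => by
    simp [Finsupp.lmapDomain_apply]

noncomputable def freeCoyonedaDesc {W : C ⥤ ModuleCat.{max u v w} R} {c : C} (w : W.obj c) :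
    freeCoyoneda.{u, v, w} R c ⟶ W where
  app x := ModuleCat.ofHom (Finsupp.linearCombination R fun g => W.map g.down w)
  naturality x y φ := ModuleCat.hom_ext <| Finsupp.lhom_ext fun g r => by
    simp [Finsupp.lmapDomain_apply]

instance {c d : C} (f : c ⟶ d) [Epi f] : Mono (freeCoyonedaMap.{u, v, w} (R := R) f) := by
  refine @NatTrans.mono_of_mono_app _ _ _ _ _ _ _ fun x => ?_
  rw [ModuleCat.mono_iff_injective]
  exact Finsupp.mapDomain_injective fun g₁ g₂ h =>
    ULift.ext _ _ ((cancel_epi f).1 (congrArg ULift.down h))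

theorem surjective_map_of_injective (W : C ⥤ ModuleCat.{max u v w} R) [Injective W] {c d : C}
    (f : c ⟶ d) [Epi f] : Function.Surjective (W.map f) := by
  intro w
  obtain ⟨h, hh⟩ := Injective.factors (freeCoyonedaDesc w) (freeCoyonedaMap f)
  refine ⟨h.app c (Finsupp.single (ULift.up (𝟙 c)) 1), ?_⟩
  have := congrArg (fun h => h.app d (Finsupp.single (ULift.up (𝟙 d)) 1)) hh
  simpa [freeCoyonedaMap, freeCoyonedaDesc, ← NatTrans.naturality_apply,
    Finsupp.lmapDomain_apply] using this

end FreeCoyoneda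

namespace Submodule

section Ring

variable {R E F : Type*} [Ring R] [AddCommGroup E] [Module R E] [AddCommGroup F] [Module R F]

/-- `Γ` is the graph of a partial linear map `E →ₗ.[R] F`. -/
def IsGraph (Γ : Submodule R (E × F)) : Prop :=
  ∀ w : F, ((0 : E), w) ∈ Γ → w = 0

variable {Γ : Submodule R (E × F)}

lemma IsGraph.eq_of_mem (hΓ : Γ.IsGraph) {x : E} {w₁ w₂ : F} (h₁ : (x, w₁) ∈ Γ)
    (h₂ : (x, w₂) ∈ Γ) : w₁ = w₂ :=
  sub_eq_zero.1 (hΓ _ (by simpa using Γ.sub_mem h₁ h₂))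

lemma isGraph_iSup_of_directed {ι : Type*} [Nonempty ι] (Γ : ι → Submodule R (E × F))
    (hdir : Directed (· ≤ ·) Γ) (hΓ : ∀ i, (Γ i).IsGraph) : (⨆ i, Γ i).IsGraph := by
  intro w hw
  obtain ⟨i, hi⟩ := (mem_iSup_of_directed Γ hdir).1 hw
  exact hΓ i w hi

lemma IsGraph.exists_linearMap (hΓ : Γ.IsGraph) (htot : ∀ x : E, ∃ w, (x, w) ∈ Γ) :
    ∃ h : E →ₗ[R] F, ∀ x, (x, h x) ∈ Γ := by
  choose h hh using htot
  exact ⟨{ toFun := h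
           map_add' := fun x y => hΓ.eq_of_mem (hh (x + y)) (add_mem (hh x) (hh y))
           map_smul' := fun a x => hΓ.eq_of_mem (hh (a • x)) (smul_mem _ a (hh x)) }, hh⟩

end Ring

variable {K E F : Type*} [DivisionRing K] [AddCommGroup E] [Module K E] [AddCommGroup F]
  [Module K F] {Γ : Submodule K (E × F)}

lemma IsGraph.sup_span_singleton (hΓ : Γ.IsGraph) {q : E × F}
    (hq : ∀ w, (q.1, w) ∈ Γ → q ∈ Γ) : (Γ ⊔ K ∙ q).IsGraph := by
  intro w hw
  obtain ⟨p, hp, _, hc, hpq⟩ := mem_sup.1 hw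
  obtain ⟨c, rfl⟩ := mem_span_singleton.1 hc
  refine hΓ w (hpq ▸ add_mem hp ?_)
  by_cases hc0 : c = 0
  · simp [hc0]
  refine smul_mem _ c (hq (-c⁻¹ • p.2) ?_)
  have hfst : -p.1 = c • q.1 := neg_eq_of_add_eq_zero_right (congrArg Prod.fst hpq)
  have hq₁ : (q.1, -c⁻¹ • p.2) = -c⁻¹ • p := by
    ext
    · simp [neg_smul, ← smul_neg, hfst, smul_smul, inv_mul_cancel₀ hc0]
    · rfl
  exact hq₁ ▸ smul_mem Γ (-c⁻¹) hp

end Submodule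

open Submodule

section PartialHom

variable {C : Type*} [Category C] {R : Type u} [Ring R] {X Y W : C ⥤ ModuleCat.{v} R}

variable (Y W) in
def pairMap {a b : C} (φ : a ⟶ b) : Y.obj a × W.obj a →ₗ[R] Y.obj b × W.obj b :=
  (Y.map φ).hom.prodMap (W.map φ).hom

lemma pairMap_id (a : C) (p : Y.obj a × W.obj a) : pairMap Y W (𝟙 a) p = p := by
  simp [pairMap]

lemma pairMap_comp {a b c : C} (φ : a ⟶ b) (ψ : b ⟶ c) (p : Y.obj a × W.obj a) :
    pairMap Y W (φ ≫ ψ) p = pairMap Y W ψ (pairMap Y W φ p) := by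
  simp [pairMap]

/-- The graph of a morphism from a subfunctor of `Y` to `W`. -/
structure IsPartialHom (Γ : ∀ c : C, Submodule R (Y.obj c × W.obj c)) : Prop where
  isGraph (c : C) : (Γ c).IsGraph
  map_le {a b : C} (φ : a ⟶ b) : (Γ a).map (pairMap Y W φ) ≤ Γ b

variable {Γ : ∀ c : C, Submodule R (Y.obj c × W.obj c)}

lemma IsPartialHom.pairMap_mem (hΓ : IsPartialHom Γ) {a b : C} (φ : a ⟶ b)
    {p : Y.obj a × W.obj a} (hp : p ∈ Γ a) : pairMap Y W φ p ∈ Γ b :=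
  hΓ.map_le φ (mem_map_of_mem hp)

lemma IsPartialHom.sSup {S : Set (∀ c : C, Submodule R (Y.obj c × W.obj c))}
    (hS : ∀ Γ ∈ S, IsPartialHom Γ) (hchain : IsChain (· ≤ ·) S) (hne : S.Nonempty) :
    IsPartialHom (sSup S) where
  isGraph c := by
    have := hne.to_subtype
    rw [sSup_apply]
    exact isGraph_iSup_of_directed _
      (hchain.directedOn.directed_val.mono_comp _ fun _ _ h => h c)
      fun Γ => (hS Γ.1 Γ.2).isGraph c
  map_le φ := by
    rw [sSup_apply, sSup_apply, Submodule.map_iSup]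
    exact iSup_mono fun Γ => (hS Γ.1 Γ.2).map_le φ

lemma IsPartialHom.exists_hom (hΓ : IsPartialHom Γ)
    (htot : ∀ c (y : Y.obj c), ∃ w, (y, w) ∈ Γ c) :
    ∃ h : Y ⟶ W, ∀ c y, (y, h.app c y) ∈ Γ c := by
  choose h hh using fun c => (hΓ.isGraph c).exists_linearMap (htot c)
  refine ⟨{ app c := ModuleCat.ofHom (h c)
            naturality a b φ := ModuleCat.hom_ext (LinearMap.ext fun y => ?_) }, hh⟩
  exact (hΓ.isGraph b).eq_of_mem (hh b _) (hΓ.pairMap_mem φ (hh a y))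

/-- The graph of `f ∘ g⁻¹`, defined on the image of `g`. -/
def graphAlong (g : X ⟶ Y) (f : X ⟶ W) (c : C) : Submodule R (Y.obj c × W.obj c) :=
  LinearMap.range ((g.app c).hom.prod (f.app c).hom)

lemma isPartialHom_graphAlong (g : X ⟶ Y) (f : X ⟶ W) [Mono g] :
    IsPartialHom (graphAlong g f) where
  isGraph c := by
    rintro w ⟨x, hx⟩
    obtain ⟨hgx, rfl⟩ := Prod.ext_iff.1 hx
    have hx0 : x = 0 := (ModuleCat.mono_iff_injective (g.app c)).1 inferInstance
      (hgx.trans (map_zero _).symm)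
    simp [hx0]
  map_le φ := by
    rintro _ ⟨_, ⟨x, rfl⟩, rfl⟩
    exact ⟨X.map φ x, by simp [pairMap, NatTrans.naturality_apply]⟩

end PartialHom

section Sequences

variable {K : Type u} [DivisionRing K] {Y W : ℤ ⥤ ModuleCat.{v} K}
  {Γ : ∀ l : ℤ, Submodule K (Y.obj l × W.obj l)}

def adjoinPair (Γ : ∀ l : ℤ, Submodule K (Y.obj l × W.obj l)) {j : ℤ}
    (p : Y.obj j × W.obj j) (l : ℤ) : Submodule K (Y.obj l × W.obj l) :=
  Γ l ⊔ ⨆ h : j ≤ l, K ∙ pairMap Y W (homOfLE h) p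

lemma le_adjoinPair {j : ℤ} (p : Y.obj j × W.obj j) : Γ ≤ adjoinPair Γ p :=
  fun _ => le_sup_left

lemma mem_adjoinPair_self {j : ℤ} (p : Y.obj j × W.obj j) : p ∈ adjoinPair Γ p j := by
  refine mem_sup_right (mem_iSup_of_mem le_rfl ?_)
  convert mem_span_singleton_self p
  exact pairMap_id j p

lemma isPartialHom_adjoinPair (hΓ : IsPartialHom Γ) {j : ℤ} {p : Y.obj j × W.obj j}
    (hp : ∀ l (h : j ≤ l) w, ((pairMap Y W (homOfLE h) p).1, w) ∈ Γ l →
      pairMap Y W (homOfLE h) p ∈ Γ l) :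
    IsPartialHom (adjoinPair Γ p) where
  isGraph l := by
    by_cases h : j ≤ l
    · rw [adjoinPair, iSup_pos h]
      exact (hΓ.isGraph l).sup_span_singleton (hp l h)
    · rw [adjoinPair, iSup_neg h, sup_bot_eq]
      exact hΓ.isGraph l
  map_le {a b} φ := by
    rw [adjoinPair, adjoinPair, Submodule.map_sup, Submodule.map_iSup]
    refine sup_le_sup (hΓ.map_le φ) (iSup_le fun h => le_iSup_of_le (h.trans (leOfHom φ)) ?_)
    rw [map_le_iff_le_comap, span_singleton_le_iff_mem, mem_comap, ← pairMap_comp]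
    exact mem_span_singleton_self _

lemma IsPartialHom.exists_consistent
    (hW : ∀ {a b : ℤ} (φ : a ⟶ b), Function.Surjective (W.map φ)) (hΓ : IsPartialHom Γ)
    {j : ℤ} (y : Y.obj j) :
    ∃ w : W.obj j, ∀ l (h : j ≤ l) v, ((pairMap Y W (homOfLE h) (y, w)).1, v) ∈ Γ l →
      pairMap Y W (homOfLE h) (y, w) ∈ Γ l := by
  by_cases hL : ∃ l, ∃ h : j ≤ l, ∃ v, (Y.map (homOfLE h) y, v) ∈ Γ l
  · obtain ⟨l₀, ⟨h₀, v₀, hv₀⟩, hmin⟩ :=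
      Int.exists_least_of_bdd ⟨j, fun l ⟨h, _⟩ => h⟩ hL
    obtain ⟨w, rfl⟩ := hW (homOfLE h₀) v₀
    refine ⟨w, fun l h v hv => ?_⟩
    have := hΓ.pairMap_mem (homOfLE (hmin l ⟨h, v, hv⟩))
      (p := pairMap Y W (homOfLE h₀) (y, w)) hv₀
    rwa [← pairMap_comp] at this
  · push Not at hL
    exact ⟨0, fun l h v hv => (hL l h v hv).elim⟩

lemma exists_mem_of_maximal_isPartialHom
    (hW : ∀ {a b : ℤ} (φ : a ⟶ b), Function.Surjective (W.map φ))
    (hΓ : Maximal IsPartialHom Γ) (j : ℤ) (y : Y.obj j) : ∃ w, (y, w) ∈ Γ j := by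
  obtain ⟨w, hw⟩ := hΓ.prop.exists_consistent hW y
  exact ⟨w, hΓ.le_of_ge (isPartialHom_adjoinPair hΓ.prop hw) (le_adjoinPair _) j
    (mem_adjoinPair_self _)⟩

theorem injective_of_surjective_map
    (hW : ∀ {a b : ℤ} (φ : a ⟶ b), Function.Surjective (W.map φ)) : Injective W := by
  refine ⟨fun {X Y} f g _ => ?_⟩
  obtain ⟨Γ, hle, hΓ⟩ := zorn_le_nonempty₀ {Γ | IsPartialHom Γ}
    (fun S hS hchain Γ hΓ => ⟨sSup S, .sSup hS hchain ⟨Γ, hΓ⟩, fun _ => le_sSup⟩)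
    _ (isPartialHom_graphAlong g f)
  obtain ⟨h, hh⟩ := hΓ.prop.exists_hom (exists_mem_of_maximal_isPartialHom hW hΓ)
  refine ⟨h, NatTrans.ext (funext fun c => ModuleCat.hom_ext (LinearMap.ext fun x => ?_))⟩
  exact (hΓ.prop.isGraph c).eq_of_mem (hh c (g.app c x)) (hle c ⟨x, rfl⟩)

end Sequences

lemma SeqCat.surjective_map (W : SeqCat k)
    (hW : ∀ i, Function.Surjective (W.d i)) {a b : ℤ} (φ : a ⟶ b) :
    Function.Surjective (W.map φ) := by
  suffices ∀ b (h : a ≤ b), Function.Surjective (W.map (homOfLE h)) from this b (leOfHom φ)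
  intro b h
  induction b, h using Int.leInduction with
  | base => exact fun x => ⟨x, by simp⟩
  | succ n hn ih =>
    rw [← homOfLE_comp hn (Int.le_add_one le_rfl), W.map_comp]
    exact (hW n).comp ih

/-- An object `W` of the category `S` of sequences of `k`-vector spaces is an injective
object of `S` if and only if the transition map `d_W^i : W^i → W^{i+1}` is surjective for
every `i ∈ ℤ`. -/
theorem injective_iff_transitions_surjective (W : SeqCat k) :
    Injective W ↔ ∀ i : ℤ, Function.Surjective (W.d i) := by
  refine ⟨fun _ i => ?_, fun hW => injective_of_surjective_map (W.surjective_map hW)⟩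
  have : Epi (homOfLE (Int.le_add_one le_rfl) : i ⟶ i + 1) :=
    ⟨fun _ _ _ => Subsingleton.elim _ _⟩
  exact surjective_map_of_injective (C := ℤ) (R := k) W _
end

section
/- An object of S is a projective object if and only if it is a direct summand of a coproduct of objects of the form S_{n,∞} with n ∈ ℤ. -/
/-!
A morphism `S_{n,∞} ⟶ W` is the same as an element of `W^n`: it is determined by the image
of `1 ∈ S_{n,∞}^n`, and any element of `W^n` is such an image. Epimorphisms of sequences are
degreewise surjective, so elements lift along them and `S_{n,∞}` is projective; hence so are
coproducts of such sequences and their retracts. Conversely, the elements of `V` assemble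
into an epimorphism `∐ S_{n,∞} ⟶ V`, which splits when `V` is projective.
-/

open CategoryTheory CategoryTheory.Limits

set_option linter.unusedVariables false

variable {k : Type} [Field k]

variable (k)

/-- The component in degree `i` of the sequence `S_{a,b}` (for `a ∈ ℤ ∪ {−∞}`,
`b ∈ ℤ ∪ {∞}`), as a submodule of `k`: it is all of `k` if `a ≤ i ≤ b` and `0`
otherwise. -/
noncomputable def SabObj (a : WithBot ℤ) (b : WithTop ℤ) (i : ℤ) : Submodule k k :=
  if a ≤ (i : WithBot ℤ) ∧ (i : WithTop ℤ) ≤ b then ⊤ else ⊥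

lemma SabObj_coe_eq_zero {a : WithBot ℤ} {b : WithTop ℤ} {i : ℤ}
    (h : ¬ (a ≤ (i : WithBot ℤ) ∧ (i : WithTop ℤ) ≤ b)) (x : ↥(SabObj k a b i)) :
    (x : k) = 0 := by
  have hm := x.2
  have he : SabObj k a b i = ⊥ := if_neg h
  exact (Submodule.eq_bot_iff _).1 he _ hm

/-- The transition maps of the sequence `S_{a,b}`: the map from degree `i` to degree `j`
is multiplication by `∏_{m=i}^{j-1} (-1)^m`, i.e. the composite of the maps
`(-1)^m · id` for `i ≤ m < j` (and it is zero when forced to be, i.e. when the target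
component vanishes). -/
noncomputable def SabMap (a : WithBot ℤ) (b : WithTop ℤ) (i j : ℤ) :
    ↥(SabObj k a b i) →ₗ[k] ↥(SabObj k a b j) where
  toFun x := if h : a ≤ (j : WithBot ℤ) ∧ (j : WithTop ℤ) ≤ b then
      ⟨(∏ m ∈ Finset.Ico i j, (-1 : k) ^ m) * (x : k), by
        rw [SabObj, if_pos h]; trivial⟩
    else 0
  map_add' x y := by
    by_cases h : a ≤ (j : WithBot ℤ) ∧ (j : WithTop ℤ) ≤ b
    · simp only [dif_pos h]
      ext
      push_cast
      ring
    · simp only [dif_neg h, add_zero]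
  map_smul' c x := by
    by_cases h : a ≤ (j : WithBot ℤ) ∧ (j : WithTop ℤ) ≤ b
    · simp only [dif_pos h, RingHom.id_apply]
      ext
      simp [smul_eq_mul]
      ring
    · simp only [dif_neg h, smul_zero, RingHom.id_apply]

lemma SabMap_id (a : WithBot ℤ) (b : WithTop ℤ) (i : ℤ) :
    SabMap k a b i i = LinearMap.id := by
  apply LinearMap.ext
  intro x
  by_cases h : a ≤ (i : WithBot ℤ) ∧ (i : WithTop ℤ) ≤ b
  · apply Subtype.ext
    simp [SabMap, h]
  · apply Subtype.ext
    simp [SabMap, h, SabObj_coe_eq_zero k h x]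

lemma SabMap_comp (a : WithBot ℤ) (b : WithTop ℤ) {i j l : ℤ}
    (hij : i ≤ j) (hjl : j ≤ l) :
    (SabMap k a b j l).comp (SabMap k a b i j) = SabMap k a b i l := by
  apply LinearMap.ext
  intro x
  by_cases hl : a ≤ (l : WithBot ℤ) ∧ (l : WithTop ℤ) ≤ b
  · by_cases hj : a ≤ (j : WithBot ℤ) ∧ (j : WithTop ℤ) ≤ b
    · apply Subtype.ext
      simp only [LinearMap.comp_apply, SabMap, LinearMap.coe_mk, AddHom.coe_mk,
        dif_pos hl, dif_pos hj]
      have key : (∏ m ∈ Finset.Ico i j, (-1 : k) ^ m) * (∏ m ∈ Finset.Ico j l, (-1 : k) ^ m)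
          = ∏ m ∈ Finset.Ico i l, (-1 : k) ^ m := by
        rw [← Finset.prod_union (Finset.Ico_disjoint_Ico_consecutive i j l),
          Finset.Ico_union_Ico_eq_Ico hij hjl]
      rw [← key]
      ring
    · have hi : ¬ (a ≤ (i : WithBot ℤ) ∧ (i : WithTop ℤ) ≤ b) := by
        intro hi
        exact hj ⟨le_trans hi.1 (by exact_mod_cast hij),
          le_trans (by exact_mod_cast hjl) hl.2⟩
      apply Subtype.ext
      simp [SabMap, hl, hj, SabObj_coe_eq_zero k hi x]
  · apply Subtype.ext
    simp [SabMap, hl]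

/-- The sequence `S_{a,b}` for `a ∈ ℤ ∪ {−∞}` and `b ∈ ℤ ∪ {∞}`: its component in
degree `i` is `k` for `a ≤ i ≤ b` and `0` otherwise, and the transition map in degree
`i` (within the interval) is `(-1)^i · id_k`. -/
noncomputable def Sab (a : WithBot ℤ) (b : WithTop ℤ) : SeqCat k where
  obj i := ModuleCat.of k (SabObj k a b i)
  map {i j} f := ModuleCat.ofHom (SabMap k a b i j)
  map_id i := by rw [SabMap_id k a b i]; rfl
  map_comp {i j l} f g := by
    rw [← ModuleCat.ofHom_comp, SabMap_comp k a b (leOfHom f) (leOfHom g)]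

/-- The condition `a ≤ b` for `a ∈ ℤ ∪ {−∞}` and `b ∈ ℤ ∪ {∞}`: the interval `[a,b]`
contains some integer. -/
def SabLE (a : WithBot ℤ) (b : WithTop ℤ) : Prop :=
  ∃ i : ℤ, a ≤ (i : WithBot ℤ) ∧ (i : WithTop ℤ) ≤ b

section

variable {k}

lemma prod_Ico_neg_one_zpow_mul_self (i j : ℤ) :
    (∏ m ∈ Finset.Ico i j, (-1 : k) ^ m) * ∏ m ∈ Finset.Ico i j, (-1 : k) ^ m = 1 := by
  rw [← Finset.prod_mul_distrib]
  exact Finset.prod_eq_one fun m _ => by rw [← mul_zpow, neg_mul_neg, one_mul, one_zpow]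

lemma prod_Ico_neg_one_zpow_mul_prod_Ico {i j l : ℤ} (hij : i ≤ j) (hjl : j ≤ l) :
    (∏ m ∈ Finset.Ico i j, (-1 : k) ^ m) * ∏ m ∈ Finset.Ico j l, (-1 : k) ^ m
      = ∏ m ∈ Finset.Ico i l, (-1 : k) ^ m := by
  rw [← Finset.prod_union (Finset.Ico_disjoint_Ico_consecutive i j l),
    Finset.Ico_union_Ico_eq_Ico hij hjl]

end

namespace Sab

variable {k}

lemma map_val {a : WithBot ℤ} {b : WithTop ℤ} {i j : ℤ} (f : i ⟶ j)
    (hj : a ≤ (j : WithBot ℤ) ∧ (j : WithTop ℤ) ≤ b) (x : (Sab k a b).obj i) :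
    ((Sab k a b).map f x).1 = (∏ m ∈ Finset.Ico i j, (-1 : k) ^ m) * x.1 := by
  change (SabMap k a b i j x).1 = _
  simp only [SabMap, LinearMap.coe_mk, AddHom.coe_mk, dif_pos hj]

lemma eq_zero_of_lt {n i : ℤ} (h : i < n) (x : (Sab k (n : WithBot ℤ) ⊤).obj i) : x = 0 :=
  Subtype.ext <| SabObj_coe_eq_zero k (fun hc => (WithBot.coe_le_coe.1 hc.1).not_gt h) x

def gen (n : ℤ) : (Sab k (n : WithBot ℤ) ⊤).obj n :=
  ⟨1, by rw [SabObj, if_pos ⟨le_rfl, le_top⟩]; trivial⟩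

lemma eq_map_smul_gen {n i : ℤ} (h : n ≤ i) (x : (Sab k (n : WithBot ℤ) ⊤).obj i) :
    x = (Sab k (n : WithBot ℤ) ⊤).map (homOfLE h)
      ((x.1 * ∏ m ∈ Finset.Ico n i, (-1 : k) ^ m) • gen n) := by
  apply Subtype.ext
  rw [map_smul]
  change x.1 = _ * ((Sab k (n : WithBot ℤ) ⊤).map (homOfLE h) (gen n)).1
  rw [map_val _ ⟨WithBot.coe_le_coe.2 h, le_top⟩, gen, mul_one, mul_assoc,
    prod_Ico_neg_one_zpow_mul_self, mul_one]

lemma hom_ext {W : SeqCat k} {n : ℤ} {f g : Sab k (n : WithBot ℤ) ⊤ ⟶ W}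
    (h : f.app n (gen n) = g.app n (gen n)) : f = g := by
  ext i x
  rcases lt_or_ge i n with hi | hi
  · rw [eq_zero_of_lt hi x, map_zero, map_zero]
  · rw [eq_map_smul_gen hi x]
    simp only [NatTrans.naturality_apply, map_smul, h]

variable {W : SeqCat k} {n : ℤ}

-- `lift w` sends `c ∈ S_{n,∞}^i` to `c • liftVec w i`. The sign undoes the transition map
-- `S_{n,∞}^n ⟶ S_{n,∞}^i`, which multiplies by the same self-inverse sign.
noncomputable def liftVec (w : W.obj n) (i : ℤ) : W.obj i :=
  if h : n ≤ i then (∏ m ∈ Finset.Ico n i, (-1 : k) ^ m) • W.map (homOfLE h) w else 0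

lemma map_val_smul_liftVec (w : W.obj n) {i j : ℤ} (f : i ⟶ j)
    (x : (Sab k (n : WithBot ℤ) ⊤).obj i) :
    ((Sab k (n : WithBot ℤ) ⊤).map f x).1 • liftVec w j = W.map f (x.1 • liftVec w i) := by
  rcases lt_or_ge i n with hi | hi
  · rw [eq_zero_of_lt hi x, map_zero]
    change (0 : k) • _ = W.map f ((0 : k) • _)
    rw [zero_smul, zero_smul, map_zero]
  have hj : n ≤ j := hi.trans (leOfHom f)
  have hW : W.map (homOfLE hj) w = W.map f (W.map (homOfLE hi) w) := by
    rw [← ConcreteCategory.comp_apply, ← W.map_comp]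
    rfl
  rw [liftVec, liftVec, dif_pos hi, dif_pos hj, map_val f ⟨WithBot.coe_le_coe.2 hj, le_top⟩,
    hW, map_smul, map_smul, smul_smul, smul_smul,
    ← prod_Ico_neg_one_zpow_mul_prod_Ico hi (leOfHom f)]
  congr 1
  linear_combination x.1 * (∏ m ∈ Finset.Ico n i, (-1 : k) ^ m) *
    prod_Ico_neg_one_zpow_mul_self (k := k) i j

noncomputable def lift (w : W.obj n) : Sab k (n : WithBot ℤ) ⊤ ⟶ W where
  app i := ModuleCat.ofHom <|
    LinearMap.toSpanSingleton k (W.obj i) (liftVec w i) ∘ₗ (SabObj k (n : WithBot ℤ) ⊤ i).subtype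
  naturality i j f := by
    ext x
    exact map_val_smul_liftVec w f x

lemma lift_app_gen (w : W.obj n) : (lift w).app n (gen n) = w := by
  change (1 : k) • liftVec w n = w
  rw [one_smul, liftVec, dif_pos le_rfl, Finset.Ico_self, Finset.prod_empty, one_smul]
  change W.map (𝟙 n) w = w
  rw [W.map_id]
  rfl

instance projective (n : ℤ) : Projective (Sab k (n : WithBot ℤ) ⊤) where
  factors {E X} f e he := by
    obtain ⟨x, hx⟩ := (ModuleCat.epi_iff_surjective _).1
      ((NatTrans.epi_iff_epi_app e).1 he n) (f.app n (gen n))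
    exact ⟨lift x, hom_ext (by rw [NatTrans.comp_app, ConcreteCategory.comp_apply,
      lift_app_gen, hx])⟩

end Sab

namespace SeqCat

variable {k}

noncomputable def coverOfElements (V : SeqCat k) :
    (∐ fun v : Σ n : ℤ, V.obj n => Sab k (v.1 : WithBot ℤ) ⊤) ⟶ V :=
  Sigma.desc fun v => Sab.lift v.2

instance epi_coverOfElements (V : SeqCat k) : Epi V.coverOfElements := by
  refine (NatTrans.epi_iff_epi_app _).2 fun i => (ModuleCat.epi_iff_surjective _).2 fun v => ?_
  refine ⟨(Sigma.ι (fun v : Σ n : ℤ, V.obj n => Sab k (v.1 : WithBot ℤ) ⊤) ⟨i, v⟩).app i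
    (Sab.gen i), ?_⟩
  rw [← ConcreteCategory.comp_apply, ← NatTrans.comp_app, coverOfElements, Sigma.ι_desc,
    Sab.lift_app_gen]

end SeqCat

/-- An object of `S` is a projective object if and only if it is a direct summand of a
coproduct of objects of the form `S_{n,∞}` with `n ∈ ℤ`. -/
theorem projective_iff_summand_of_coproduct_of_Sninfty (V : SeqCat k) :
    Projective V ↔
      ∃ (ι : Type) (n : ι → ℤ)
        (s : V ⟶ ∐ fun j : ι => Sab k (n j : WithBot ℤ) (⊤ : WithTop ℤ))
        (r : (∐ fun j : ι => Sab k (n j : WithBot ℤ) (⊤ : WithTop ℤ)) ⟶ V),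
        s ≫ r = 𝟙 V := by
  constructor
  · intro hV
    exact ⟨_, Sigma.fst, Projective.factorThru (𝟙 V) V.coverOfElements, V.coverOfElements,
      Projective.factorThru_comp _ _⟩
  · rintro ⟨_, _, s, r, hsr⟩
    exact Retract.projective ⟨s, r, hsr⟩
end

section
/- For every V ∈ S and every n ∈ ℤ, the family of subspaces V_n^i (:= V^i for i ≤ n and := I^i_n for i > n) defines a subobject V_n of V in S; these subobjects satisfy V_n ⊆ V_{n+1} for all n ∈ ℤ and V = ∪_{n∈ℤ} V_n, and moreover for every n the inclusion V_n ↪ V_{n+1} admits a retraction in S (so V_n is a direct summand of V_{n+1}). -/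
open CategoryTheory CategoryTheory.Limits

variable {k : Type} [Field k]

set_option linter.unusedVariables false

/-- The component in degree `i` of the subobject `V_n ⊆ V`: it is all of `V^i` for
`i ≤ n`, and the image `I^i_n` of the composite transition map `d^{n,i} : V^n → V^i`
for `i > n`. -/
noncomputable def genObj (V : SeqCat k) (n i : ℤ) : Submodule k (V.obj i) :=
  if h : i ≤ n then ⊤ else LinearMap.range (V.map (homOfLE (by omega : n ≤ i))).hom

lemma genObj_stable (V : SeqCat k) (n : ℤ) {i j : ℤ} (f : i ⟶ j) :
    ∀ v ∈ genObj V n i, (V.map f) v ∈ genObj V n j := by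
  intro v hv
  have hij : i ≤ j := leOfHom f
  by_cases hj : j ≤ n
  · rw [genObj, dif_pos hj]
    trivial
  · rw [genObj, dif_neg hj]
    by_cases hi : i ≤ n
    · have hcomp : V.map (homOfLE (by omega : i ≤ n)) ≫
          V.map (homOfLE (by omega : n ≤ j)) = V.map f := by
        rw [← V.map_comp]
        exact congrArg V.map (Subsingleton.elim _ f)
      exact ⟨(V.map (homOfLE (by omega : i ≤ n))) v, congrArg (fun g => g.hom v) hcomp⟩
    · rw [genObj, dif_neg hi] at hv
      obtain ⟨w, hw⟩ := hv
      have hcomp : V.map (homOfLE (by omega : n ≤ i)) ≫ V.map f =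
          V.map (homOfLE (by omega : n ≤ j)) := by
        rw [← V.map_comp]
        exact congrArg V.map (Subsingleton.elim _ _)
      refine ⟨w, ?_⟩
      rw [← hw]
      exact (congrArg (fun g => g.hom w) hcomp).symm

lemma genObj_le (V : SeqCat k) (n i : ℤ) : genObj V n i ≤ genObj V (n + 1) i := by
  intro v hv
  by_cases h1 : i ≤ n + 1
  · rw [genObj, dif_pos h1]
    trivial
  · rw [genObj, dif_neg h1]
    have hi : ¬ i ≤ n := by omega
    rw [genObj, dif_neg hi] at hv
    obtain ⟨w, hw⟩ := hv
    have hcomp : V.map (homOfLE (by omega : n ≤ n + 1)) ≫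
        V.map (homOfLE (by omega : n + 1 ≤ i)) = V.map (homOfLE (by omega : n ≤ i)) := by
      rw [← V.map_comp]
      exact congrArg V.map (Subsingleton.elim _ _)
    refine ⟨(V.map (homOfLE (by omega : n ≤ n + 1))) w, ?_⟩
    rw [← hw]
    exact congrArg (fun g => g.hom w) hcomp

/-- The subobject `V_n` of `V`, whose component in degree `i` is `V^i` for `i ≤ n` and
`I^i_n = im(d^{n,i})` for `i > n`. -/
noncomputable def genSeq (V : SeqCat k) (n : ℤ) : SeqCat k where
  obj i := ModuleCat.of k (genObj V n i)
  map {i j} f := ModuleCat.ofHom ((V.map f).hom.restrict (genObj_stable V n f))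
  map_id i := by
    apply ModuleCat.hom_ext
    apply LinearMap.ext
    intro x
    apply Subtype.ext
    show (V.map (𝟙 i)).hom x.1 = _
    rw [V.map_id]
    rfl
  map_comp {i j l} f g := by
    apply ModuleCat.hom_ext
    apply LinearMap.ext
    intro x
    apply Subtype.ext
    show (V.map (f ≫ g)).hom x.1 = (V.map g).hom ((V.map f).hom x.1)
    rw [V.map_comp]
    rfl

/-- The inclusion `V_n ⟶ V` in `S`. -/
noncomputable def genInc (V : SeqCat k) (n : ℤ) : genSeq V n ⟶ V where
  app i := ModuleCat.ofHom (genObj V n i).subtype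
  naturality := by
    intro i j f
    apply ModuleCat.hom_ext
    apply LinearMap.ext
    intro x
    rfl

/-- The inclusion `V_n ⟶ V_{n+1}` in `S`. -/
noncomputable def genStep (V : SeqCat k) (n : ℤ) : genSeq V n ⟶ genSeq V (n + 1) where
  app i := ModuleCat.ofHom (Submodule.inclusion (genObj_le V n i))
  naturality := by
    intro i j f
    apply ModuleCat.hom_ext
    apply LinearMap.ext
    intro x
    apply Subtype.ext
    rfl

/-!
The only nontrivial part is the retraction `V_{n+1} ⟶ V_n`. Put `A = I^{n+1}_n ⊆ V^{n+1}` and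
`K_j = ker d^{n+1,n+1+j}`. Because the `K_j` form an increasing chain, a complement of `A` can be
built one step at a time so that it splits every `K_j` (compact generation of the lattice of
subspaces keeps the union disjoint from `A`); the projection `p` onto `A` along it preserves every
`K_j`. Hence `d^{n+1,i} w ↦ d^{n+1,i} (p w)` is a well-defined map `V_{n+1}^i → I^i_n` for `i > n`.
Together with the identity in degrees `≤ n` it commutes with the transition maps because `p`
fixes `A`, and it restricts to the identity on `V_n`.
-/

section Lattice

variable {α : Type*}

theorem exists_le_disjoint_inf_sup_eq [Lattice α] [BoundedOrder α] [IsModularLattice α]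
    [ComplementedLattice α] {a s b : α} (hsb : s ≤ b) (has : Disjoint a s) :
    ∃ t, s ≤ t ∧ t ≤ b ∧ Disjoint a t ∧ a ⊓ b ⊔ t = b := by
  have hdisj : Disjoint (⟨s, hsb⟩ : Set.Iic b) ⟨a ⊓ b, inf_le_right⟩ := by
    rw [Set.Iic.disjoint_iff]
    exact has.symm.mono_right inf_le_left
  obtain ⟨⟨t, htb⟩, hst, ht⟩ := hdisj.exists_isCompl
  rw [Set.Iic.isCompl_iff] at ht
  refine ⟨t, hst, htb, ?_, sup_comm t _ ▸ ht.2⟩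
  rw [disjoint_iff, ← inf_of_le_left htb, inf_left_comm]
  exact ht.1.eq_bot

theorem exists_isCompl_inf_sup_inf_eq [CompleteLattice α] [IsModularLattice α]
    [ComplementedLattice α] [IsCompactlyGenerated α] (a : α) {k : ℕ → α} (hk : Monotone k) :
    ∃ c, IsCompl a c ∧ ∀ j, a ⊓ k j ⊔ c ⊓ k j = k j := by
  choose! E hE using fun s b => exists_le_disjoint_inf_sup_eq (a := a) (s := s) (b := b)
  -- `s (j + 1)` enlarges `s j` to a complement of `a ⊓ k j` inside `k j`
  let s : ℕ → α := fun j => Nat.rec ⊥ (fun j t => E t (k j)) j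
  have hs : ∀ j, s j ≤ k j ∧ Disjoint a (s j) := by
    intro j
    induction j with
    | zero => exact ⟨bot_le, disjoint_bot_right⟩
    | succ j ih =>
      obtain ⟨-, hle, hdisj, -⟩ := hE _ _ ih.1 ih.2
      exact ⟨hle.trans (hk j.le_succ), hdisj⟩
  have hmono : Monotone s := monotone_nat_of_le_succ fun j => (hE _ _ (hs j).1 (hs j).2).1
  have hdisj : Disjoint a (⨆ j, s j) := hmono.directed_le.disjoint_iSup_right.2 fun j => (hs j).2
  obtain ⟨c, hsc, hc⟩ := hdisj.symm.exists_isCompl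
  refine ⟨c, hc.symm, fun j => le_antisymm (sup_le inf_le_right inf_le_right) ?_⟩
  obtain ⟨-, hle, -, hsup⟩ := hE _ _ (hs j).1 (hs j).2
  calc k j = a ⊓ k j ⊔ s (j + 1) := hsup.symm
    _ ≤ a ⊓ k j ⊔ c ⊓ k j := sup_le_sup_left (le_inf ((le_iSup s (j + 1)).trans hsc) hle) _

end Lattice

theorem Submodule.exists_isProj_mapsTo {R M : Type*} [DivisionRing R] [AddCommGroup M]
    [Module R M] (A : Submodule R M) {N : ℕ → Submodule R M} (hN : Monotone N) :
    ∃ p : M →ₗ[R] M, LinearMap.IsProj A p ∧ ∀ j, Set.MapsTo p (N j) (N j) := by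
  obtain ⟨C, hAC, hC⟩ := exists_isCompl_inf_sup_inf_eq A hN
  refine ⟨A.projection C hAC, ⟨projection_apply_mem hAC,
    fun x hx => projection_apply_of_mem_left hAC hx⟩, fun j z hz => ?_⟩
  rw [← hC j] at hz
  obtain ⟨a, ha, c, hc, rfl⟩ := Submodule.mem_sup.1 hz
  rw [map_add, projection_apply_of_mem_left hAC ha.1, projection_apply_of_mem_right hAC hc.1,
    add_zero]
  exact ha.2

namespace LinearMap

variable {R M N P : Type*} [Ring R] [AddCommGroup M] [AddCommGroup N] [AddCommGroup P]
  [Module R M] [Module R N] [Module R P]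

noncomputable def rangeLift (f : M →ₗ[R] N) (g : M →ₗ[R] P) (h : ker f ≤ ker g) :
    range f →ₗ[R] P :=
  (ker f).liftQ g h ∘ₗ f.quotKerEquivRange.symm.toLinearMap

theorem rangeLift_apply (f : M →ₗ[R] N) (g : M →ₗ[R] P) (h : ker f ≤ ker g) (m : M) :
    f.rangeLift g h ⟨f m, mem_range_self f m⟩ = g m := by
  simp [rangeLift, quotKerEquivRange_symm_apply_image]

end LinearMap

open LinearMap

lemma SeqCat.map_map_apply (V : SeqCat k) {a b c : ℤ} (h₁ : a ≤ b) (h₂ : b ≤ c) (x : V.obj a) :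
    V.map (homOfLE h₂) (V.map (homOfLE h₁) x) = V.map (homOfLE (h₁.trans h₂)) x := by
  rw [← ModuleCat.comp_apply, ← V.map_comp]
  rfl

lemma SeqCat.ker_map_le_ker_map (V : SeqCat k) {a b c : ℤ} (h₁ : a ≤ b) (h₂ : b ≤ c) :
    ker (V.map (homOfLE h₁)).hom ≤ ker (V.map (homOfLE (h₁.trans h₂))).hom := fun z hz => by
  rw [mem_ker] at hz ⊢
  rw [← V.map_map_apply h₁ h₂, hz, map_zero]

theorem SeqCat.exists_isProj_map_eq_zero (V : SeqCat k) {m : ℤ} (A : Submodule k (V.obj m)) :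
    ∃ p : V.obj m →ₗ[k] V.obj m, IsProj A p ∧
      ∀ i (h : m ≤ i) z, V.map (homOfLE h) z = 0 → V.map (homOfLE h) (p z) = 0 := by
  obtain ⟨p, hp, hmaps⟩ := A.exists_isProj_mapsTo
    (N := fun j : ℕ => ker (V.map (homOfLE (show m ≤ m + j by omega))).hom)
    (monotone_nat_of_le_succ fun j => V.ker_map_le_ker_map _ (by omega))
  refine ⟨p, hp, fun i h z hz => ?_⟩
  obtain ⟨j, rfl⟩ : ∃ j : ℕ, i = m + j := ⟨(i - m).toNat, by omega⟩
  exact hmaps j hz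

lemma genObj_eq_range (V : SeqCat k) {n i : ℤ} (h : n ≤ i) :
    genObj V n i = range (V.map (homOfLE h)).hom := by
  rw [genObj]
  split_ifs with hi
  · obtain rfl := le_antisymm hi h
    rw [show homOfLE h = 𝟙 i from rfl, V.map_id, ModuleCat.hom_id, range_id]
  · rfl

lemma mem_genObj_of_le (V : SeqCat k) {n i : ℤ} (h : i ≤ n) (v : V.obj i) : v ∈ genObj V n i := by
  simp [genObj, h]

lemma map_mem_genObj (V : SeqCat k) {n i : ℤ} (h : n ≤ i) (w : V.obj n) :
    V.map (homOfLE h) w ∈ genObj V n i :=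
  genObj_eq_range V h ▸ mem_range_self _ w

noncomputable def genLift {W V : SeqCat k} {n : ℤ} (φ : W ⟶ V)
    (hφ : ∀ i x, φ.app i x ∈ genObj V n i) : W ⟶ genSeq V n where
  app i := ModuleCat.ofHom ((φ.app i).hom.codRestrict _ (hφ i))
  naturality i j f := by
    ext x
    exact Subtype.ext (LinearMap.congr_fun (congrArg ModuleCat.Hom.hom (φ.naturality f)) x)

lemma genLift_comp_genInc {W V : SeqCat k} {n : ℤ} (φ : W ⟶ V)
    (hφ : ∀ i x, φ.app i x ∈ genObj V n i) : genLift φ hφ ≫ genInc V n = φ := rfl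

lemma exists_map_eq_of_mem_genObj (V : SeqCat k) {n i : ℤ} (h : n ≤ i) {v : V.obj i}
    (hv : v ∈ genObj V n i) : ∃ w, V.map (homOfLE h) w = v := by
  rwa [genObj_eq_range V h] at hv

instance genInc_mono (V : SeqCat k) (n : ℤ) : Mono (genInc V n) :=
  have : ∀ i, Mono ((genInc V n).app i) := fun i =>
    (ModuleCat.mono_iff_injective _).2 (Submodule.injective_subtype _)
  NatTrans.mono_of_mono_app _

section Retraction

variable (V : SeqCat k) (n : ℤ) {p : V.obj (n + 1) →ₗ[k] V.obj (n + 1)}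
  (hp : IsProj (range (V.map (homOfLE (by omega : n ≤ n + 1))).hom) p)
  (hker : ∀ i (h : n + 1 ≤ i) z, V.map (homOfLE h) z = 0 → V.map (homOfLE h) (p z) = 0)

noncomputable def genProjectionApp (i : ℤ) : genObj V (n + 1) i →ₗ[k] V.obj i :=
  if hi : i ≤ n then (genObj V (n + 1) i).subtype
  else
    have h : n + 1 ≤ i := by omega
    (V.map (homOfLE h)).hom.rangeLift ((V.map (homOfLE h)).hom ∘ₗ p) (hker i h) ∘ₗ
      Submodule.inclusion (genObj_eq_range V h).le

lemma genProjectionApp_of_le {i : ℤ} (hi : i ≤ n) (x : genObj V (n + 1) i) :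
    genProjectionApp V n hker i x = x := by
  simp [genProjectionApp, hi]

lemma genProjectionApp_of_eq_map {i : ℤ} (h : n + 1 ≤ i) (w : V.obj (n + 1))
    (x : genObj V (n + 1) i) (hx : (x : V.obj i) = V.map (homOfLE h) w) :
    genProjectionApp V n hker i x = V.map (homOfLE h) (p w) := by
  obtain ⟨x, hx'⟩ := x
  subst hx
  rw [genProjectionApp, dif_neg (by omega)]
  exact rangeLift_apply _ _ (hker i h) w

noncomputable def genProjection : genSeq V (n + 1) ⟶ V where
  app i := ModuleCat.ofHom (genProjectionApp V n hker i)
  naturality i j f := by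
    have hij := leOfHom f
    obtain rfl : f = homOfLE hij := Subsingleton.elim _ _
    ext ⟨x, hx⟩
    change genProjectionApp V n hker j ⟨V.map (homOfLE hij) x, _⟩ =
      V.map (homOfLE hij) (genProjectionApp V n hker i ⟨x, hx⟩)
    rcases le_or_gt j n with hj | hj
    · rw [genProjectionApp_of_le V n hker hj, genProjectionApp_of_le V n hker (hij.trans hj)]
    rcases le_or_gt i n with hi | hi
    · have hfix : p (V.map (homOfLE (by omega : i ≤ n + 1)) x) =
          V.map (homOfLE (by omega : i ≤ n + 1)) x := by
        refine hp.map_id _ ⟨V.map (homOfLE hi) x, ?_⟩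
        exact V.map_map_apply _ _ x
      rw [genProjectionApp_of_eq_map V n hker (by omega : n + 1 ≤ j) _ _
          (V.map_map_apply (by omega) _ x).symm, hfix, V.map_map_apply,
        genProjectionApp_of_le V n hker hi]
    · obtain ⟨w, rfl⟩ := exists_map_eq_of_mem_genObj V (by omega : n + 1 ≤ i) hx
      rw [genProjectionApp_of_eq_map V n hker (by omega : n + 1 ≤ j) w _
          (V.map_map_apply _ _ w), genProjectionApp_of_eq_map V n hker _ w _ rfl,
        V.map_map_apply]

lemma genProjection_app_mem (i : ℤ) (x : (genSeq V (n + 1)).obj i) :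
    (genProjection V n hp hker).app i x ∈ genObj V n i := by
  change genProjectionApp V n hker i x ∈ genObj V n i
  rcases le_or_gt i n with hi | hi
  · exact mem_genObj_of_le V hi _
  · obtain ⟨w, hw⟩ := exists_map_eq_of_mem_genObj V (by omega : n + 1 ≤ i) x.2
    obtain ⟨u, hu⟩ := hp.map_mem w
    rw [genProjectionApp_of_eq_map V n hker _ w x hw.symm, ← hu, V.map_map_apply]
    exact map_mem_genObj V _ u

noncomputable def genRetraction : genSeq V (n + 1) ⟶ genSeq V n :=
  genLift (genProjection V n hp hker) (genProjection_app_mem V n hp hker)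

theorem genStep_comp_genRetraction : genStep V n ≫ genRetraction V n hp hker = 𝟙 _ := by
  rw [← cancel_mono (genInc V n), Category.assoc, genRetraction, genLift_comp_genInc,
    Category.id_comp]
  ext i ⟨x, hx⟩
  change genProjectionApp V n hker i ⟨x, _⟩ = x
  rcases le_or_gt i n with hi | hi
  · exact genProjectionApp_of_le V n hker hi _
  · obtain ⟨u, rfl⟩ := exists_map_eq_of_mem_genObj V hi.le hx
    rw [genProjectionApp_of_eq_map V n hker (by omega : n + 1 ≤ i)
        (V.map (homOfLE (by omega : n ≤ n + 1)) u) _ (V.map_map_apply _ _ u).symm,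
      hp.map_id _ (mem_range_self _ u), V.map_map_apply]

end Retraction

/-- For every `V ∈ S` and every `n ∈ ℤ`, the family of subspaces
`V_n^i := V^i` for `i ≤ n` and `:= I^i_n` for `i > n` defines a subobject `V_n` of `V`
in `S` (the inclusion `V_n ⟶ V` is a monomorphism); these subobjects satisfy
`V_n ⊆ V_{n+1}` for all `n ∈ ℤ` and `V = ∪_{n∈ℤ} V_n`, and moreover, for every `n`, the
inclusion `V_n ↪ V_{n+1}` admits a retraction in `S` (so `V_n` is a direct summand of
`V_{n+1}`). -/
theorem gen_filtration (V : SeqCat k) :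
    (∀ n : ℤ, Mono (genInc V n)) ∧
    (∀ n i : ℤ, genObj V n i ≤ genObj V (n + 1) i) ∧
    (∀ (i : ℤ) (v : V.obj i), ∃ n : ℤ, v ∈ genObj V n i) ∧
    (∀ n : ℤ, ∃ r : genSeq V (n + 1) ⟶ genSeq V n,
      genStep V n ≫ r = 𝟙 (genSeq V n)) := by
  refine ⟨fun n => inferInstance, genObj_le V, fun i v => ⟨i, mem_genObj_of_le V le_rfl v⟩,
    fun n => ?_⟩
  obtain ⟨p, hp, hker⟩ := V.exists_isProj_map_eq_zero
    (range (V.map (homOfLE (by omega : n ≤ n + 1))).hom)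
  exact ⟨genRetraction V n hp hker, genStep_comp_genRetraction V n hp hker⟩
end
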